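/- arXiv:1006.5122 — 8 statements merged into one kernel-verified Lean document; each statement's English description precedes it below -/
import Mathlib

section
/- Let h be an entropy function of the category of left A-modules. The following conditions are equivalent: (a) h is binary, i.e. h(M) ∈ {0, ∞} for every A-module M; (b) n·h = h (pointwise) for every integer n ≥ 1; (c) there exists an integer n > 1 with n·h = h (pointwise). -/
open DirectSum

/-- An invariant of the category of left `A`-modules: a function assigning to every
left `A`-module a value in `[0,∞]`. -/
abbrev ModuleInvariant (A : Type) [Ring A] : Type 1 :=
  ∀ (M : Type) [AddCommGroup M] [Module A M], ENNReal

/-- `h` is an entropy function of the category of left `A`-modules: it satisfies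
(A1) vanishing on zero modules and invariance under isomorphism, (A2) `h M = 0` iff
`h` vanishes on every submodule and every quotient of `M`, and (A3) `h` vanishes on a
direct sum iff it vanishes on every summand. -/
def IsEntropyFunction (A : Type) [Ring A] (h : ModuleInvariant A) : Prop :=
  (∀ (M : Type) [AddCommGroup M] [Module A M], Subsingleton M → h M = 0) ∧
  (∀ (M : Type) [AddCommGroup M] [Module A M] (N : Type) [AddCommGroup N] [Module A N],
      Nonempty (M ≃ₗ[A] N) → h M = h N) ∧
  (∀ (M : Type) [AddCommGroup M] [Module A M],
      h M = 0 ↔ ∀ N : Submodule A M, h ↥N = 0 ∧ h (M ⧸ N) = 0) ∧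
  (∀ (J : Type) (M : J → Type) [∀ j, AddCommGroup (M j)] [∀ j, Module A (M j)],
      h (⨁ j, M j) = 0 ↔ ∀ j, h (M j) = 0)

/-- An invariant is binary if it takes only the values `0` and `∞`. -/
def IsBinary (A : Type) [Ring A] (h : ModuleInvariant A) : Prop :=
  ∀ (M : Type) [AddCommGroup M] [Module A M], h M = 0 ∨ h M = ⊤

private lemma ennreal_aux {n : ℕ} (hn : 1 < n) {x : ENNReal} (hx : (n : ENNReal) * x = x) :
    x = 0 ∨ x = ⊤ := by
  by_contra hc
  push_neg at hc
  obtain ⟨h0, ht⟩ := hc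
  have : (n : ENNReal) = 1 := by
    have := hx.trans (one_mul x).symm
    exact (ENNReal.mul_left_inj h0 ht).mp (by simpa [mul_comm] using this)
  have : (n : ℕ) = 1 := by exact_mod_cast this
  omega

/-- For an entropy function `h` of `Mod_A`, the following are equivalent:
(a) `h` is binary; (b) `n • h = h` for every `n ≥ 1`; (c) `n • h = h` for some `n > 1`. -/
theorem isBinary_iff_mul (A : Type) [Ring A] (h : ModuleInvariant A)
    (H : IsEntropyFunction A h) :
    (IsBinary A h ↔
      ∀ n : ℕ, 1 ≤ n → ∀ (M : Type) [AddCommGroup M] [Module A M], (n : ENNReal) * h M = h M) ∧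
    (IsBinary A h ↔
      ∃ n : ℕ, 1 < n ∧ ∀ (M : Type) [AddCommGroup M] [Module A M], (n : ENNReal) * h M = h M) := by
  have key : ∀ n : ℕ, 1 ≤ n → IsBinary A h →
      ∀ (M : Type) [AddCommGroup M] [Module A M], (n : ENNReal) * h M = h M := by
    intro n hn hb M _ _
    rcases hb M with h0 | ht
    · simp [h0]
    · rw [ht, ENNReal.mul_top]
      simp; omega
  constructor
  · constructor
    · intro hb n hn M _ _
      exact key n hn hb M
    · intro hmul M _ _
      exact ennreal_aux (by norm_num : 1 < 2) (by exact_mod_cast hmul 2 (by norm_num) M)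
  · constructor
    · intro hb
      exact ⟨2, by norm_num, fun M _ _ => key 2 (by norm_num) hb M⟩
    · rintro ⟨n, hn, hmul⟩ M _ _
      exact ennreal_aux hn (hmul M)
end

section
/- Let h be an entropy function of the category of left A-modules and define h^b by h^b(M) = 0 if h(M) = 0 and h^b(M) = ∞ otherwise. Then: h^b is a binary entropy function of the category of left A-modules; h(M) ≤ h^b(M) for every A-module M; for every binary entropy function h' with h(M) ≤ h'(M) for all M one has h^b(M) ≤ h'(M) for all M; and h^b(M) = sup_{n≥1} n·h(M) for every A-module M. That is, h^b is the binary hull of h, the least binary entropy function above h. -/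
open DirectSum

/-- The binary hull `h^b` of an entropy function `h` (defined by `h^b M = 0` if `h M = 0`
and `h^b M = ∞` otherwise) is a binary entropy function, it lies above `h`, it is the
least binary entropy function above `h`, and `h^b M = sup_{n ≥ 1} n * h M`. -/
theorem binaryHull_spec (A : Type) [Ring A] (h hb : ModuleInvariant A)
    (H : IsEntropyFunction A h)
    (Hdef : ∀ (M : Type) [AddCommGroup M] [Module A M],
      (h M = 0 → hb M = 0) ∧ (h M ≠ 0 → hb M = ⊤)) :
    IsEntropyFunction A hb ∧ IsBinary A hb ∧
    (∀ (M : Type) [AddCommGroup M] [Module A M], h M ≤ hb M) ∧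
    (∀ h' : ModuleInvariant A, IsEntropyFunction A h' → IsBinary A h' →
      (∀ (M : Type) [AddCommGroup M] [Module A M], h M ≤ h' M) →
      ∀ (M : Type) [AddCommGroup M] [Module A M], hb M ≤ h' M) ∧
    (∀ (M : Type) [AddCommGroup M] [Module A M],
      hb M = ⨆ n : ℕ, ⨆ _ : 1 ≤ n, (n : ENNReal) * h M) := by
  obtain ⟨H1, H2, H3, H4⟩ := H
  have hbiff : ∀ (M : Type) [AddCommGroup M] [Module A M], hb M = 0 ↔ h M = 0 := by
    intro M _ _
    constructor
    · intro h0
      by_contra hne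
      have := (Hdef M).2 hne
      rw [this] at h0
      exact ENNReal.top_ne_zero h0
    · exact (Hdef M).1
  have hbin : IsBinary A hb := by
    intro M _ _
    by_cases h0 : h M = 0
    · exact Or.inl ((Hdef M).1 h0)
    · exact Or.inr ((Hdef M).2 h0)
  refine ⟨⟨?_, ?_, ?_, ?_⟩, hbin, ?_, ?_, ?_⟩
  · intro M _ _ hs
    exact (hbiff M).2 (H1 M hs)
  · intro M _ _ N _ _ hiso
    have := H2 M N hiso
    by_cases h0 : h M = 0
    · rw [(Hdef M).1 h0, (Hdef N).1 (this ▸ h0)]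
    · rw [(Hdef M).2 h0, (Hdef N).2 (this ▸ h0)]
  · intro M _ _
    rw [hbiff M, H3 M]
    constructor
    · intro hall N
      exact ⟨(hbiff _).2 (hall N).1, (hbiff _).2 (hall N).2⟩
    · intro hall N
      exact ⟨(hbiff _).1 (hall N).1, (hbiff _).1 (hall N).2⟩
  · intro J M _ _
    rw [hbiff, H4]
    exact forall_congr' fun j => (hbiff (M j)).symm
  · intro M _ _
    by_cases h0 : h M = 0
    · rw [h0, (Hdef M).1 h0]
    · rw [(Hdef M).2 h0]; exact le_top
  · intro h' He' Hb' Hle M _ _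
    by_cases h0 : h M = 0
    · rw [(Hdef M).1 h0]; exact zero_le
    · rcases Hb' M with h'0 | h'top
      · exfalso
        have := Hle M
        rw [h'0] at this
        exact h0 (le_antisymm this zero_le)
      · rw [h'top]; exact le_top
  · intro M _ _
    by_cases h0 : h M = 0
    · rw [(Hdef M).1 h0, h0]
      simp
    · rw [(Hdef M).2 h0]
      refine le_antisymm ?_ le_top
      have key : ⨆ n : ℕ, (n : ENNReal) * h M = ⊤ := by
        rw [← ENNReal.iSup_mul, ENNReal.iSup_natCast, ENNReal.top_mul h0]
      calc (⊤ : ENNReal) = ⨆ n : ℕ, (n : ENNReal) * h M := key.symm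
        _ ≤ ⨆ n : ℕ, ⨆ _ : 1 ≤ n, (n : ENNReal) * h M := by
            refine iSup_le fun n => ?_
            rcases Nat.eq_zero_or_pos n with rfl | hn
            · simp
            · exact le_trans (le_iSup (fun _ : 1 ≤ n => (n : ENNReal) * h M) hn) (le_iSup (fun m : ℕ => ⨆ _ : 1 ≤ m, (m : ENNReal) * h M) n)
end

section
/- Let h be an entropy function of the category of left A-modules. For every A-linear map f : M → N between A-modules, f(P_h(M)) ⊆ P_h(N); that is, the image under f of the Pinsker radical of M is contained in the Pinsker radical of N. -/
open DirectSum

/-- The Pinsker radical of an invariant `h`: the sum (join) of all submodules on which `h`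
vanishes. -/
def PinskerRadical (A : Type) [Ring A] (h : ModuleInvariant A)
    (M : Type) [AddCommGroup M] [Module A M] : Submodule A M :=
  sSup {N : Submodule A M | h ↥N = 0}

/-- The Pinsker radical is functorial: the image of `P_h(M)` under any `A`-linear map
`f : M → N` is contained in `P_h(N)`. -/
theorem pinskerRadical_map_le (A : Type) [Ring A] (h : ModuleInvariant A)
    (H : IsEntropyFunction A h)
    (M : Type) [AddCommGroup M] [Module A M] (N : Type) [AddCommGroup N] [Module A N]
    (f : M →ₗ[A] N) :
    (PinskerRadical A h M).map f ≤ PinskerRadical A h N := by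
  obtain ⟨h1, h2, h3, h4⟩ := H
  rw [PinskerRadical, sSup_eq_iSup, Submodule.map_iSup]
  apply iSup_le
  intro P
  rw [Submodule.map_iSup]
  apply iSup_le
  intro hP
  apply le_sSup
  -- P.map f is isomorphic to a quotient of P
  have key : h ↥(P.map f) = 0 := by
    set g : ↥P →ₗ[A] N := f ∘ₗ P.subtype with hg
    have hrange : LinearMap.range g = P.map f := by
      rw [hg, LinearMap.range_comp, Submodule.range_subtype]
    have e : (↥P ⧸ LinearMap.ker g) ≃ₗ[A] ↥(P.map f) :=
      (LinearMap.quotKerEquivRange g).trans (LinearEquiv.ofEq _ _ hrange)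
    have hq : h (↥P ⧸ LinearMap.ker g) = 0 := ((h3 ↥P).mp hP (LinearMap.ker g)).2
    rw [← h2 _ _ ⟨e⟩]
    exact hq
  exact key
end

section
/- Let h be an entropy function of the category of left A-modules. Then the Pinsker radical is hereditary: for every A-module M and every submodule N of M, the image of P_h(N) under the inclusion N → M equals N ∩ P_h(M). -/
open DirectSum

/-- `h` vanishes on the Pinsker radical itself. -/
lemma h_pinskerRadical (A : Type) [Ring A] (h : ModuleInvariant A)
    (H : IsEntropyFunction A h) (M : Type) [AddCommGroup M] [Module A M] :
    h ↥(PinskerRadical A h M) = 0 := by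
  classical
  obtain ⟨h1, h2, h3, h4⟩ := H
  set S := {N : Submodule A M | h ↥N = 0} with hS
  have hsup : PinskerRadical A h M = ⨆ K : S, (K : Submodule A M) := by
    rw [PinskerRadical, sSup_eq_iSup']
  have hrange : PinskerRadical A h M =
      LinearMap.range (DirectSum.coeLinearMap fun K : S => (K : Submodule A M)) := by
    rw [hsup, DirectSum.range_coeLinearMap]
  have hds : h (⨁ K : S, ↥(K : Submodule A M)) = 0 :=
    (h4 S fun K : S => ↥(K : Submodule A M)).mpr fun K => K.2
  have hquot := (h3 _ |>.mp hds
    (LinearMap.ker (DirectSum.coeLinearMap fun K : S => (K : Submodule A M)))).2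
  have := h2 _ _
    ⟨(DirectSum.coeLinearMap fun K : S => (K : Submodule A M)).quotKerEquivRange⟩
  rw [hrange]
  rw [← this]
  exact hquot

/-- The Pinsker radical is hereditary: for every submodule `N` of `M`, the image of
`P_h(N)` under the inclusion `N → M` equals `N ⊓ P_h(M)`. -/
theorem pinskerRadical_hereditary (A : Type) [Ring A] (h : ModuleInvariant A)
    (H : IsEntropyFunction A h) (M : Type) [AddCommGroup M] [Module A M]
    (N : Submodule A M) :
    (PinskerRadical A h ↥N).map N.subtype = N ⊓ PinskerRadical A h M := by
  obtain ⟨h1, h2, h3, h4⟩ := H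
  apply le_antisymm
  · refine le_inf (Submodule.map_subtype_le _ _) ?_
    have hPN : h ↥(PinskerRadical A h ↥N) = 0 := h_pinskerRadical A h ⟨h1, h2, h3, h4⟩ ↥N
    have hiso : h ↥((PinskerRadical A h ↥N).map N.subtype) = 0 := by
      have := h2 _ _
        ⟨Submodule.equivSubtypeMap N (PinskerRadical A h ↥N)⟩
      rw [← this]; exact hPN
    exact le_sSup hiso
  · -- h vanishes on N ⊓ P_h(M)
    have hP : h ↥(PinskerRadical A h M) = 0 := h_pinskerRadical A h ⟨h1, h2, h3, h4⟩ M
    have hle : N ⊓ PinskerRadical A h M ≤ PinskerRadical A h M := inf_le_right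
    have hsub : h ↥(Submodule.comap (PinskerRadical A h M).subtype
        (N ⊓ PinskerRadical A h M)) = 0 := (h3 _ |>.mp hP _).1
    have hNP : h ↥(N ⊓ PinskerRadical A h M) = 0 := by
      have := h2 _ _ ⟨Submodule.comapSubtypeEquivOfLe hle⟩
      rw [← this]; exact hsub
    have hK : h ↥(Submodule.comap N.subtype (N ⊓ PinskerRadical A h M)) = 0 := by
      have := h2 _ _
        ⟨Submodule.comapSubtypeEquivOfLe (inf_le_left :
          N ⊓ PinskerRadical A h M ≤ N)⟩
      rw [this]; exact hNP
    have hKle : Submodule.comap N.subtype (N ⊓ PinskerRadical A h M) ≤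
        PinskerRadical A h ↥N := le_sSup hK
    calc N ⊓ PinskerRadical A h M
        = N ⊓ (N ⊓ PinskerRadical A h M) := by rw [← inf_assoc, inf_idem]
      _ = (Submodule.comap N.subtype (N ⊓ PinskerRadical A h M)).map N.subtype :=
          (Submodule.map_comap_subtype _ _).symm
      _ ≤ (PinskerRadical A h ↥N).map N.subtype := Submodule.map_mono hKle
end

section
/- Let A be a commutative integral domain and h an additive entropy function of the category of A-modules. Then h(I) = h(A) for every nonzero ideal I of A, where both I and A are regarded as A-modules. -/
open DirectSum

/-- `h` is additive (axiom (A2*)): `h M = h N + h (M ⧸ N)` for every submodule `N` of `M`. -/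
def IsAdditive (A : Type) [Ring A] (h : ModuleInvariant A) : Prop :=
  ∀ (M : Type) [AddCommGroup M] [Module A M] (N : Submodule A M),
    h M = h ↥N + h (M ⧸ N)

/-- If `A` is an integral domain and `h` is an additive entropy function of `Mod_A`,
then `h I = h A` for every nonzero ideal `I` of `A`. -/
theorem additive_entropy_ideal_eq (A : Type) [CommRing A] [IsDomain A]
    (h : ModuleInvariant A) (H : IsEntropyFunction A h) (Hadd : IsAdditive A h)
    (I : Ideal A) (hI : I ≠ ⊥) :
    h ↥I = h A := by
  obtain ⟨a, haI, ha⟩ := Submodule.exists_mem_ne_zero_of_ne_bot hI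
  -- the map x ↦ a * x from A into I
  let f : A →ₗ[A] ↥I :=
    { toFun := fun x => ⟨a * x, I.mul_mem_right x haI⟩
      map_add' := by intro x y; ext; simp [mul_add]
      map_smul' := by intro c x; ext; simp [mul_left_comm, mul_comm] }
  have hf : Function.Injective f := by
    intro x y hxy
    have : a * x = a * y := congrArg Subtype.val hxy
    exact mul_left_cancel₀ ha this
  have e : Nonempty (A ≃ₗ[A] ↥(LinearMap.range f)) := ⟨LinearEquiv.ofInjective f hf⟩
  have h1 : h ↥I = h A + h (↥I ⧸ LinearMap.range f) := by
    rw [Hadd ↥I (LinearMap.range f), H.2.1 A ↥(LinearMap.range f) e]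
  have h2 : h A = h ↥I + h (A ⧸ I) := Hadd A I
  have le1 : h A ≤ h ↥I := h1 ▸ le_self_add
  have le2 : h ↥I ≤ h A := h2 ▸ le_self_add
  exact le_antisymm le2 le1
end

section
/- Let A be a commutative integral domain and h an additive entropy function of the category of A-modules with 0 < h(A) < ∞. Then h(t(M)) = 0 and h(M) = h(M/t(M)) for every A-module M, where t(M) denotes the torsion submodule of M (the set of elements of M annihilated by some nonzero element of A). -/
open DirectSum

lemma aux_quot_ideal (A : Type) [CommRing A] [IsDomain A]
    (h : ModuleInvariant A) (H : IsEntropyFunction A h) (Hadd : IsAdditive A h)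
    (hfin : h A < ⊤) (I : Ideal A) (hI : I ≠ ⊥) : h (A ⧸ I) = 0 := by
  obtain ⟨a, haI, ha⟩ := Submodule.exists_mem_ne_zero_of_ne_bot hI
  set S : Submodule A A := Submodule.span A {a} with hS
  have hinj : Function.Injective (LinearMap.toSpanSingleton A A a) := by
    intro x y hxy
    simp only [LinearMap.toSpanSingleton_apply, smul_eq_mul] at hxy
    exact mul_right_cancel₀ ha hxy
  have hiso : Nonempty (A ≃ₗ[A] ↥S) := by
    refine ⟨(LinearEquiv.ofInjective _ hinj).trans (LinearEquiv.ofEq _ _ ?_)⟩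
    exact (LinearMap.span_singleton_eq_range A A a).symm
  have hSA : h ↥S = h A := (H.2.1 _ _ ⟨(Classical.choice hiso).symm⟩)
  have hq : h (A ⧸ S) = 0 := by
    have := Hadd A S
    rw [hSA] at this
    have h0 : h A + 0 = h A + h (A ⧸ S) := by rw [add_zero]; exact this
    exact ((ENNReal.add_right_inj hfin.ne).mp h0).symm
  have hle : S ≤ I := Submodule.span_le.mpr (by simpa using haI)
  have := ((H.2.2.1 (A ⧸ S)).mp hq (Submodule.map S.mkQ I)).2
  calc h (A ⧸ I) = h ((A ⧸ S) ⧸ Submodule.map S.mkQ I) :=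
        H.2.1 _ _ ⟨(Submodule.quotientQuotientEquivQuotient S I hle).symm⟩
    _ = 0 := this

lemma aux_torsion_zero (A : Type) [CommRing A] [IsDomain A]
    (h : ModuleInvariant A) (H : IsEntropyFunction A h) (Hadd : IsAdditive A h)
    (hfin : h A < ⊤) (T : Type) [AddCommGroup T] [Module A T]
    (htor : ∀ x : T, ∃ a : A, a ≠ 0 ∧ a • x = 0) : h T = 0 := by
  classical
  set K : T → Ideal A := fun x => LinearMap.ker (LinearMap.toSpanSingleton A T x) with hK
  have hKne : ∀ x, K x ≠ ⊥ := by
    intro x hbot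
    obtain ⟨a, ha, hax⟩ := htor x
    have : a ∈ K x := by simpa [hK, LinearMap.mem_ker] using hax
    rw [hbot] at this
    exact ha (by simpa using this)
  have hsummand : ∀ x : T, h (A ⧸ K x) = 0 := fun x =>
    aux_quot_ideal A h H Hadd hfin (K x) (hKne x)
  have hD : h (⨁ x : T, A ⧸ K x) = 0 :=
    (H.2.2.2 T (fun x => A ⧸ K x)).mpr hsummand
  set f : (⨁ x : T, A ⧸ K x) →ₗ[A] T :=
    DirectSum.toModule A T T (fun x => (K x).liftQ (LinearMap.toSpanSingleton A T x) le_rfl)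
    with hf
  have hsurj : Function.Surjective f := by
    intro x
    refine ⟨DirectSum.lof A T _ x (Submodule.Quotient.mk 1), ?_⟩
    rw [hf, DirectSum.toModule_lof]
    rw [Submodule.liftQ_apply, LinearMap.toSpanSingleton_apply, one_smul]
  have := ((H.2.2.1 _).mp hD (LinearMap.ker f)).2
  calc h T = h ((⨁ x : T, A ⧸ K x) ⧸ LinearMap.ker f) :=
        H.2.1 _ _ ⟨(LinearMap.quotKerEquivOfSurjective f hsurj).symm⟩
    _ = 0 := this

/-- If `A` is an integral domain and `h` is an additive entropy function of `Mod_A` with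
`0 < h A < ∞`, then `h` vanishes on the torsion submodule of every module `M`, and
`h M = h (M ⧸ t(M))`. -/
theorem additive_entropy_torsion (A : Type) [CommRing A] [IsDomain A]
    (h : ModuleInvariant A) (H : IsEntropyFunction A h) (Hadd : IsAdditive A h)
    (hpos : 0 < h A) (hfin : h A < ⊤)
    (M : Type) [AddCommGroup M] [Module A M] :
    h ↥(Submodule.torsion A M) = 0 ∧ h M = h (M ⧸ Submodule.torsion A M) := by
  have ht : h ↥(Submodule.torsion A M) = 0 := by
    refine aux_torsion_zero A h H Hadd hfin _ ?_
    rintro ⟨x, hx⟩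
    obtain ⟨a, hax⟩ := hx
    refine ⟨(a : A), mem_nonZeroDivisors_iff_ne_zero.mp a.2, ?_⟩
    ext
    simpa [Submonoid.smul_def] using hax
  refine ⟨ht, ?_⟩
  have := Hadd M (Submodule.torsion A M)
  rw [ht, zero_add] at this
  exact this
end

section
/- Let A be a principal ideal domain and h an additive entropy function of the category of A-modules with h(A) = ∞. If b, c ∈ A are elements with h(A/Ab) < ∞ and h(A/Ac) < ∞, then h(A/Abc) = h(A/Ab) + h(A/Ac). -/
open DirectSum

/-- Let `A` be a principal ideal domain and `h` an additive entropy function with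
`h A = ∞`. If `b c : A` satisfy `h (A ⧸ Ab) < ∞` and `h (A ⧸ Ac) < ∞`, then
`h (A ⧸ Abc) = h (A ⧸ Ab) + h (A ⧸ Ac)`. -/
theorem additive_entropy_pid_mul (A : Type) [CommRing A] [IsDomain A]
    [IsPrincipalIdealRing A]
    (h : ModuleInvariant A) (H : IsEntropyFunction A h) (Hadd : IsAdditive A h)
    (htop : h A = ⊤) (b c : A)
    (hb : h (A ⧸ (Ideal.span {b} : Ideal A)) < ⊤)
    (hc : h (A ⧸ (Ideal.span {c} : Ideal A)) < ⊤) :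
    h (A ⧸ (Ideal.span {b * c} : Ideal A)) =
      h (A ⧸ (Ideal.span {b} : Ideal A)) + h (A ⧸ (Ideal.span {c} : Ideal A)) := by
  obtain ⟨-, hiso, -, -⟩ := H
  -- b ≠ 0
  have hb0 : b ≠ 0 := by
    rintro rfl
    have : (Ideal.span {(0 : A)} : Ideal A) = ⊥ := Ideal.span_zero
    have := hiso (A ⧸ (Ideal.span {(0 : A)} : Ideal A)) A
      ⟨(Submodule.quotEquivOfEqBot _ this)⟩
    rw [this, htop] at hb
    exact (lt_irrefl _ hb).elim
  set S : Submodule A A := (Ideal.span {b * c} : Ideal A) with hS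
  set T : Submodule A A := (Ideal.span {b} : Ideal A) with hT
  have hST : S ≤ T := Ideal.span_singleton_le_span_singleton.2 ⟨c, rfl⟩
  set N : Submodule A (A ⧸ S) := T.map S.mkQ with hN
  have key := Hadd (A ⧸ S) N
  -- quotient part
  have e1 : ((A ⧸ S) ⧸ N) ≃ₗ[A] A ⧸ T := Submodule.quotientQuotientEquivQuotient S T hST
  -- submodule part : N ≃ A ⧸ span {c}
  set f : A →ₗ[A] A ⧸ S := S.mkQ ∘ₗ LinearMap.toSpanSingleton A A b with hf
  have hker : LinearMap.ker f = (Ideal.span {c} : Ideal A) := by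
    ext x
    simp only [hf, LinearMap.mem_ker, LinearMap.comp_apply,
      LinearMap.toSpanSingleton_apply, Submodule.mkQ_apply,
      Submodule.Quotient.mk_eq_zero]
    rw [hS]
    rw [show (Ideal.span {b * c} : Ideal A) = (Ideal.span {b * c} : Ideal A) from rfl]
    constructor
    · intro hx
      have : b * c ∣ x • b := Ideal.mem_span_singleton.1 hx
      have : b * c ∣ b * x := by rwa [smul_eq_mul, mul_comm x b] at this
      exact Ideal.mem_span_singleton.2 ((mul_dvd_mul_iff_left hb0).1 this)
    · intro hx
      have : c ∣ x := Ideal.mem_span_singleton.1 hx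
      refine Ideal.mem_span_singleton.2 ?_
      rw [smul_eq_mul, mul_comm x b]
      exact mul_dvd_mul_left b this
  have hrange : LinearMap.range f = N := by
    rw [hf, LinearMap.range_comp, hN, hT]
    congr 1
    exact (LinearMap.span_singleton_eq_range A A b).symm
  have e2 : (↥N) ≃ₗ[A] A ⧸ (Ideal.span {c} : Ideal A) :=
    ((LinearEquiv.ofEq _ _ hrange.symm).trans f.quotKerEquivRange.symm).trans
      (Submodule.quotEquivOfEq _ _ hker)
  have hq : h ((A ⧸ S) ⧸ N) = h (A ⧸ (Ideal.span {b} : Ideal A)) := hiso _ _ ⟨e1⟩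
  have hn : h (↥N) = h (A ⧸ (Ideal.span {c} : Ideal A)) := hiso _ _ ⟨e2⟩
  rw [key, hq, hn, add_comm]
end

section
/- Let R be a ring, (M,φ) an algebraic flow over R, and N a finitely generated submodule of M such that every x ∈ N is integral over φ, i.e. there exist k ≥ 1 and a₀,…,a_{k−1} ∈ R with φ^k(x) = Σ_{j=0}^{k−1} a_j φ^j(x). Then the trajectory T(φ,N) = Σ_{n∈ℕ} φ^n(N) is a finitely generated φ-invariant submodule of M; more precisely, there exists n ≥ 1 such that T(φ,N) = N + φ(N) + … + φ^{n−1}(N). -/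
/-- Let `(M, φ)` be an algebraic flow over a ring `R` and `N` a finitely generated
submodule of `M` such that every `x ∈ N` is integral over `φ`, i.e.
`φ^k x = ∑_{j<k} a_j • φ^j x` for some `k ≥ 1` and `a_j ∈ R`. Then the trajectory
`T(φ,N) = ∑_{n ∈ ℕ} φ^n(N)` is a finitely generated `φ`-invariant submodule of `M`,
and indeed `T(φ,N) = N + φ(N) + ⋯ + φ^{n-1}(N)` for some `n ≥ 1`. -/
theorem trajectory_fg_of_pointwise_integral (R : Type) [Ring R]
    (M : Type) [AddCommGroup M] [Module R M] (φ : M →ₗ[R] M)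
    (N : Submodule R M) (hfg : N.FG)
    (hint : ∀ x ∈ N, ∃ k : ℕ, 1 ≤ k ∧ ∃ a : Fin k → R,
      (φ ^ k) x = ∑ j : Fin k, a j • (φ ^ (j : ℕ)) x) :
    (⨆ i : ℕ, N.map (φ ^ i)).FG ∧
    (∀ x ∈ ⨆ i : ℕ, N.map (φ ^ i), φ x ∈ ⨆ i : ℕ, N.map (φ ^ i)) ∧
    (∃ n : ℕ, 1 ≤ n ∧ (⨆ i : ℕ, N.map (φ ^ i)) = ⨆ i : Fin n, N.map (φ ^ (i : ℕ))) := by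
  classical
  obtain ⟨s, hs⟩ := hfg
  -- choice of integrality degree for each element of N
  let k : M → ℕ := fun x => if h : x ∈ N then (hint x h).choose else 1
  let n : ℕ := s.sup k ⊔ 1
  have hn1 : 1 ≤ n := le_sup_right
  set S : Submodule R M := ⨆ i : Fin n, N.map (φ ^ (i : ℕ)) with hS
  have hle : ∀ i : ℕ, i < n → N.map (φ ^ i) ≤ S := fun i hi =>
    le_iSup (fun j : Fin n => N.map (φ ^ (j : ℕ))) ⟨i, hi⟩
  -- key: φ^n sends N into S
  have hkey : ∀ x ∈ N, (φ ^ n) x ∈ S := by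
    intro x hx
    rw [← hs] at hx
    induction hx using Submodule.span_induction with
    | mem x hxs =>
      have hxN : x ∈ N := hs ▸ Submodule.subset_span hxs
      obtain ⟨hk1, a, ha⟩ := (hint x hxN).choose_spec
      set kx := (hint x hxN).choose with hkx
      have hkn : kx ≤ n := by
        have h1 : k x ≤ n := le_trans (Finset.le_sup hxs) le_sup_left
        rwa [show k x = kx from dif_pos hxN] at h1
      have hpow : (φ ^ n) x = (φ ^ (n - kx)) ((φ ^ kx) x) := by
        rw [← Module.End.mul_apply, ← pow_add, Nat.sub_add_cancel hkn]
      rw [hpow, ha, map_sum]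
      refine Submodule.sum_mem S fun j _ => ?_
      rw [map_smul, ← Module.End.mul_apply, ← pow_add]
      refine Submodule.smul_mem S _ (hle (n - kx + (j : ℕ)) ?_ ⟨x, hxN, rfl⟩)
      have := j.2
      omega
    | zero => simp
    | add y z _ _ hy hz => rw [map_add]; exact S.add_mem hy hz
    | smul r y _ hy => rw [map_smul]; exact S.smul_mem r hy
  have hmapn : N.map (φ ^ n) ≤ S := fun y hy => by
    obtain ⟨x, hx, rfl⟩ := hy; exact hkey x hx
  have hle' : ∀ i : ℕ, i ≤ n → N.map (φ ^ i) ≤ S := by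
    intro i hi
    rcases lt_or_eq_of_le hi with h | h
    · exact hle i h
    · exact h ▸ hmapn
  have hmapS : S.map φ ≤ S := by
    rw [hS, Submodule.map_iSup]
    refine iSup_le fun i => ?_
    rw [← Submodule.map_comp, ← Module.End.mul_eq_comp, ← pow_succ']
    exact hle' _ i.2
  have hall : ∀ m : ℕ, N.map (φ ^ m) ≤ S := by
    intro m
    induction m with
    | zero => exact hle 0 hn1
    | succ m ih =>
      rw [pow_succ', Module.End.mul_eq_comp, Submodule.map_comp]
      exact le_trans (Submodule.map_mono ih) hmapS
  have heq : (⨆ i : ℕ, N.map (φ ^ i)) = S :=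
    le_antisymm (iSup_le hall)
      (iSup_le fun i : Fin n => le_iSup (fun j : ℕ => N.map (φ ^ j)) (i : ℕ))
  refine ⟨?_, ?_, n, hn1, heq⟩
  · rw [heq]
    exact Submodule.fg_iSup _ fun i => Submodule.FG.map _ ⟨s, hs⟩
  · intro x hx
    rw [heq] at hx ⊢
    exact hmapS (Submodule.mem_map_of_mem hx)
end
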